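/- For arbitrary smooth functions u, v : ℝ³ → ℝ (coordinates x₁,x₂,x₃), define A = ∂₂∂₃∂₃ u − ∂₂∂₂∂₂ v − x₂·∂₁∂₂ u − 3∂₁ u and C = ∂₃⁶ u − ∂₂∂₂∂₃⁴ v − 3x₂·∂₁∂₃⁴ u + 2x₂·∂₁∂₂∂₂∂₃∂₃ v − 2∂₁∂₂∂₃∂₃ v + 3x₂²·∂₁∂₁∂₃∂₃ u − x₂²·∂₁∂₁∂₂∂₂ v + 2x₂·∂₁∂₁∂₂ v − x₂³·∂₁∂₁∂₁ u − 2∂₁∂₁ v. Then the differential identity ∂₃⁴ A − 2x₂·∂₁∂₃∂₃ A + x₂²·∂₁∂₁ A − ∂₂ C = 0 holds identically. -/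

import Mathlib

/-- Partial derivative in the `i`-th coordinate direction on `ℝ³`. -/
noncomputable def pd (i : Fin 3) (f : (Fin 3 → ℝ) → ℝ) : (Fin 3 → ℝ) → ℝ :=
  fun x => fderiv ℝ f x (Pi.single i 1)

@[fun_prop]
theorem pd_contDiff {f : (Fin 3 → ℝ) → ℝ} (hf : ContDiff ℝ (⊤ : ℕ∞) f) (i : Fin 3) :
    ContDiff ℝ (⊤ : ℕ∞) (pd i f) := by
  unfold pd
  exact (hf.fderiv_right (by simp)).clm_apply contDiff_const

@[fun_prop]
theorem pd_differentiable {f : (Fin 3 → ℝ) → ℝ} (hf : ContDiff ℝ (⊤ : ℕ∞) f) (i : Fin 3) :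
    Differentiable ℝ (pd i f) :=
  (pd_contDiff hf i).differentiable (by simp)

theorem pd_comm {f : (Fin 3 → ℝ) → ℝ} (hf : ContDiff ℝ (⊤ : ℕ∞) f) (i j : Fin 3) :
    pd i (pd j f) = pd j (pd i f) := by
  funext x
  have hd : ∀ y, HasFDerivAt f (fderiv ℝ f y) y := fun y =>
    ((hf.differentiable (by simp)) y).hasFDerivAt
  have h2 : HasFDerivAt (fderiv ℝ f) (fderiv ℝ (fderiv ℝ f) x) x :=
    (((hf.fderiv_right (m := 1) (by exact WithTop.coe_le_coe.mpr le_top)).differentiable one_ne_zero) x).hasFDerivAt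
  have hsymm := second_derivative_symmetric hd h2
  have key : ∀ w : Fin 3 → ℝ,
      fderiv ℝ (fun y => fderiv ℝ f y w) x
        = (ContinuousLinearMap.apply ℝ ℝ w).comp (fderiv ℝ (fderiv ℝ f) x) := by
    intro w
    exact (((ContinuousLinearMap.apply ℝ ℝ w).hasFDerivAt.comp x h2)).fderiv
  show fderiv ℝ (fun y => fderiv ℝ f y (Pi.single j 1)) x (Pi.single i 1)
      = fderiv ℝ (fun y => fderiv ℝ f y (Pi.single i 1)) x (Pi.single j 1)
  rw [key, key]
  exact hsymm _ _

theorem pd_comm01 {f : (Fin 3 → ℝ) → ℝ} (hf : ContDiff ℝ (⊤ : ℕ∞) f) :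
    pd 1 (pd 0 f) = pd 0 (pd 1 f) := pd_comm hf 1 0

theorem pd_comm02 {f : (Fin 3 → ℝ) → ℝ} (hf : ContDiff ℝ (⊤ : ℕ∞) f) :
    pd 2 (pd 0 f) = pd 0 (pd 2 f) := pd_comm hf 2 0

theorem pd_comm12 {f : (Fin 3 → ℝ) → ℝ} (hf : ContDiff ℝ (⊤ : ℕ∞) f) :
    pd 2 (pd 1 f) = pd 1 (pd 2 f) := pd_comm hf 2 1

theorem pd_sub {f g : (Fin 3 → ℝ) → ℝ} (hf : Differentiable ℝ f) (hg : Differentiable ℝ g)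
    (i : Fin 3) : pd i (fun x => f x - g x) = fun x => pd i f x - pd i g x := by
  funext x
  simp [pd, fderiv_fun_sub (hf x) (hg x)]

theorem pd_add {f g : (Fin 3 → ℝ) → ℝ} (hf : Differentiable ℝ f) (hg : Differentiable ℝ g)
    (i : Fin 3) : pd i (fun x => f x + g x) = fun x => pd i f x + pd i g x := by
  funext x
  simp [pd, fderiv_fun_add (hf x) (hg x)]

theorem pd_const_mul {f : (Fin 3 → ℝ) → ℝ} (hf : Differentiable ℝ f) (c : ℝ)
    (i : Fin 3) : pd i (fun x => c * f x) = fun x => c * pd i f x := by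
  funext x
  simp [pd, fderiv_const_mul (hf x) c]

theorem coord_hasFDerivAt (x : Fin 3 → ℝ) :
    HasFDerivAt (fun y : Fin 3 → ℝ => y 1)
      (ContinuousLinearMap.proj 1 : (Fin 3 → ℝ) →L[ℝ] ℝ) x :=
  (ContinuousLinearMap.proj 1 : (Fin 3 → ℝ) →L[ℝ] ℝ).hasFDerivAt

theorem pd_x1_mul {f : (Fin 3 → ℝ) → ℝ} (hf : Differentiable ℝ f) (i : Fin 3) :
    pd i (fun x => x 1 * f x)
      = fun x => (Pi.single i 1 : Fin 3 → ℝ) 1 * f x + x 1 * pd i f x := by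
  funext x
  have h : fderiv ℝ (fun y => y 1 * f y) x = _ := ((coord_hasFDerivAt x).mul (hf x).hasFDerivAt).fderiv
  simp only [pd, h]
  simp
  ring

theorem pd_x1sq_mul {f : (Fin 3 → ℝ) → ℝ} (hf : Differentiable ℝ f) (i : Fin 3) :
    pd i (fun x => (x 1) ^ 2 * f x)
      = fun x => 2 * x 1 * (Pi.single i 1 : Fin 3 → ℝ) 1 * f x + (x 1) ^ 2 * pd i f x := by
  have hg : Differentiable ℝ (fun x : Fin 3 → ℝ => x 1 * f x) := by fun_prop
  have e1 : (fun x : Fin 3 → ℝ => (x 1) ^ 2 * f x) = fun x => x 1 * (x 1 * f x) := by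
    funext y; ring
  rw [e1, pd_x1_mul hg, pd_x1_mul hf]
  funext x
  ring

theorem pd_x1cube_mul {f : (Fin 3 → ℝ) → ℝ} (hf : Differentiable ℝ f) (i : Fin 3) :
    pd i (fun x => (x 1) ^ 3 * f x)
      = fun x => 3 * (x 1) ^ 2 * (Pi.single i 1 : Fin 3 → ℝ) 1 * f x + (x 1) ^ 3 * pd i f x := by
  have hg : Differentiable ℝ (fun x : Fin 3 → ℝ => (x 1) ^ 2 * f x) := by fun_prop
  have e1 : (fun x : Fin 3 → ℝ => (x 1) ^ 3 * f x) = fun x => x 1 * ((x 1) ^ 2 * f x) := by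
    funext y; ring
  rw [e1, pd_x1_mul hg, pd_x1sq_mul hf]
  funext x
  ring

theorem single_zero : (Pi.single (0 : Fin 3) (1 : ℝ) : Fin 3 → ℝ) 1 = 0 := by simp
theorem single_one : (Pi.single (1 : Fin 3) (1 : ℝ) : Fin 3 → ℝ) 1 = 1 := by simp
theorem single_two : (Pi.single (2 : Fin 3) (1 : ℝ) : Fin 3 → ℝ) 1 = 0 := by simp

theorem stmt_19 (u v : (Fin 3 → ℝ) → ℝ)
    (hu : ContDiff ℝ (⊤ : ℕ∞) u) (hv : ContDiff ℝ (⊤ : ℕ∞) v)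
    (A C : (Fin 3 → ℝ) → ℝ)
    (hA : A = fun x => pd 1 (pd 2 (pd 2 u)) x - pd 1 (pd 1 (pd 1 v)) x
      - x 1 * pd 0 (pd 1 u) x - 3 * pd 0 u x)
    (hC : C = fun x =>
      pd 2 (pd 2 (pd 2 (pd 2 (pd 2 (pd 2 u))))) x
      - pd 1 (pd 1 (pd 2 (pd 2 (pd 2 (pd 2 v))))) x
      - 3 * x 1 * pd 0 (pd 2 (pd 2 (pd 2 (pd 2 u)))) x
      + 2 * x 1 * pd 0 (pd 1 (pd 1 (pd 2 (pd 2 v)))) x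
      - 2 * pd 0 (pd 1 (pd 2 (pd 2 v))) x
      + 3 * (x 1) ^ 2 * pd 0 (pd 0 (pd 2 (pd 2 u))) x
      - (x 1) ^ 2 * pd 0 (pd 0 (pd 1 (pd 1 v))) x
      + 2 * x 1 * pd 0 (pd 0 (pd 1 v)) x
      - (x 1) ^ 3 * pd 0 (pd 0 (pd 0 u)) x
      - 2 * pd 0 (pd 0 v) x) :
    ∀ x, pd 2 (pd 2 (pd 2 (pd 2 A))) x
      - 2 * x 1 * pd 0 (pd 2 (pd 2 A)) x
      + (x 1) ^ 2 * pd 0 (pd 0 A) x - pd 1 C x = 0 := by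
  subst hA hC
  intro x
  simp only [mul_assoc]
  simp (disch := fun_prop) only [pd_sub, pd_add, pd_const_mul, pd_x1_mul, pd_x1sq_mul,
    pd_x1cube_mul, single_zero, single_one, single_two, mul_zero, zero_mul, mul_one, one_mul,
    add_zero, zero_add, sub_zero, pd_comm01, pd_comm02, pd_comm12]
  ring
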